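/- Let P be a prime implication filter of an MV-algebra L and f : L → M an MV-morphism with sh(f) = f⁻¹({1}) ⊆ P, such that every counit of M lies in the upward closure of f[P]. Then ℓ(P) ⊆ sh(f). -/

import Mathlib

/-- An MV-algebra `(α, ⊕, ¬, 0)` with the standard axioms. -/
class MV (α : Type*) extends Add α, Neg α, Zero α where
  add_assoc : ∀ a b c : α, a + (b + c) = (a + b) + c
  add_comm : ∀ a b : α, a + b = b + a
  add_zero : ∀ a : α, a + 0 = a
  neg_neg : ∀ a : α, - -a = a
  add_neg_zero : ∀ a : α, a + -(0 : α) = -(0 : α)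
  luk : ∀ a b : α, -(-a + b) + b = -(-b + a) + a

namespace MV

variable {α : Type*} [MV α]

/-- The top element `1 = ¬0`. -/
def one (α : Type*) [MV α] : α := -(0 : α)

/-- Implication `x → y = ¬x ⊕ y`. -/
def imp (a b : α) : α := -a + b

/-- Strong conjunction `x ⊗ y = ¬(¬x ⊕ ¬y)`. -/
def otimes (a b : α) : α := -(-a + -b)

/-- Join `x ∨ y = (x → y) → y`. -/
def sup (a b : α) : α := imp (imp a b) b

/-- Meet `x ∧ y = ¬(¬x ∨ ¬y)`. -/
def inf (a b : α) : α := -(sup (-a) (-b))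

/-- Order: `x ≤ y` iff `x → y = 1`. -/
def le (a b : α) : Prop := imp a b = one α

/-- Strict order. -/
def lt (a b : α) : Prop := le a b ∧ a ≠ b

/-- `n`-fold `⊗`-power. -/
def pow (a : α) : ℕ → α
  | 0 => one α
  | n + 1 => otimes a (pow a n)

/-- An implication filter: a lattice filter closed under `⊗`. -/
def IsImpFilter (F : Set α) : Prop :=
  one α ∈ F ∧ (∀ x ∈ F, ∀ y : α, le x y → y ∈ F) ∧
    (∀ x ∈ F, ∀ y ∈ F, inf x y ∈ F) ∧ (∀ x ∈ F, ∀ y ∈ F, otimes x y ∈ F)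

/-- A prime implication filter: proper and `x ∨ y ∈ F → x ∈ F ∨ y ∈ F`. -/
def IsPrime (F : Set α) : Prop :=
  IsImpFilter F ∧ F ≠ Set.univ ∧ ∀ x y : α, sup x y ∈ F → x ∈ F ∨ y ∈ F

/-- A minimal prime implication filter. -/
def IsMinimalPrime (F : Set α) : Prop :=
  IsPrime F ∧ ∀ G : Set α, IsPrime G → G ⊆ F → G = F

/-- A maximal proper implication filter. -/
def IsMaximal (F : Set α) : Prop :=
  IsImpFilter F ∧ F ≠ Set.univ ∧
    ∀ G : Set α, IsImpFilter G → G ≠ Set.univ → F ⊆ G → G = F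

/-- A counit: `u < 1` joining to `1` with some `v < 1`. -/
def IsCounit (u : α) : Prop :=
  lt u (one α) ∧ ∃ v : α, lt v (one α) ∧ sup u v = one α

/-- The implication filter generated by a set. -/
def gen (S : Set α) : Set α := ⋂₀ {F : Set α | IsImpFilter F ∧ S ⊆ F}

/-- The Conrad filter: the implication filter generated by all counits. -/
def conrad (α : Type*) [MV α] : Set α := gen {u : α | IsCounit u}

/-- The localizing filter `ℓ(P)`, generated by `{x → p : p ∈ P, x ∉ P}`. -/
def locFilter (P : Set α) : Set α :=
  gen {z : α | ∃ x : α, x ∉ P ∧ ∃ p ∈ P, z = imp x p}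

end MV


/-! Shells of MV-morphisms are implication filters, so it suffices to put each generator `x → p`
(`x ∉ P`, `p ∈ P`) into `sh(f)`. If `f(x → p) ≠ 1`, then also `f(p → x) ≠ 1`, for otherwise
`p → x ∈ sh(f) ⊆ P` and `x ∈ P`. By prelinearity `f(p → x) ∨ f(x → p) = 1`, so `f(p → x)` is a
counit of `M` and lies above some `f(q)` with `q ∈ P`; then `q → (p → x) ∈ sh(f) ⊆ P`, and again
`x ∈ P`. -/

namespace MV

variable {α β : Type*} [MV α] [MV β]

instance : Std.Associative (α := α) (· + ·) := ⟨fun a b c => (MV.add_assoc a b c).symm⟩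

instance : Std.Commutative (α := α) (· + ·) := ⟨MV.add_comm⟩

theorem add_one (a : α) : a + one α = one α := add_neg_zero a

theorem le_one (a : α) : le a (one α) := add_neg_zero (-a)

theorem one_imp (a : α) : imp (one α) a = a := by
  rw [imp, one, neg_neg, MV.add_comm, MV.add_zero]

theorem imp_self (a : α) : imp a a = one α := by
  have h := luk (one α) a
  rwa [one, neg_neg, MV.add_comm 0, MV.add_zero, add_neg_zero] at h

theorem sup_comm (a b : α) : sup a b = sup b a := luk a b

theorem sup_imp_left_eq (a b : α) : sup (imp a b) a = imp (imp (imp a b) a) (sup a b) := by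
  rw [sup_comm]
  calc -(-a + imp a b) + imp a b
      = sup (-(imp a b)) (-a) + b := by
        simp only [sup, imp, neg_neg]; ac_rfl
    _ = sup (-a) (-(imp a b)) + b := by rw [sup_comm]
    _ = imp (imp (imp a b) a) (sup a b) := by
        simp only [sup, imp, neg_neg]; ac_rfl

/-- With `w = (a → b) → a`, commutativity of `∨` writes `¬w ∨ ¬b` both as `X ⊕ ¬w` and as `Y ⊕ ¬b`;
`sup_imp_left_eq` trades the `a` next to `¬w` for `a ∨ b = ¬(a → b) ⊕ b`, whose `b` then cancels
against `¬b`. -/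
theorem sup_imp_imp (a b : α) : sup (imp a b) (imp b a) = one α := by
  set w := imp (imp a b) a
  calc sup (imp a b) (imp b a)
      = sup (-w) (-b) + a := by
        simp only [w, sup, imp, neg_neg]; ac_rfl
    _ = -(b + -w) + imp w a := by
        rw [sup_comm]; simp only [sup, imp, neg_neg]; ac_rfl
    _ = sup (-b) (-w) + -(imp a b) + b := by
        rw [show imp w a = sup (imp a b) a from rfl, sup_imp_left_eq]
        simp only [w, sup, imp, neg_neg]; ac_rfl
    _ = sup (-w) (-b) + -(imp a b) + b := by rw [sup_comm]
    _ = -(- -w + -b) + -(imp a b) + imp b b := by simp only [sup, imp]; ac_rfl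
    _ = one α := by rw [imp_self, add_one]

theorem otimes_imp_le (a b : α) : le (otimes a (imp a b)) b :=
  calc imp (otimes a (imp a b)) b
      = -a + sup a b := by simp only [otimes, sup, imp, neg_neg]; ac_rfl
    _ = -(imp b a) + imp a a := by rw [sup_comm]; simp only [sup, imp]; ac_rfl
    _ = one α := by rw [imp_self, add_one]

theorem inf_self (a : α) : inf a a = a := by
  rw [inf, sup, imp_self, one_imp, neg_neg]

theorem otimes_one (a : α) : otimes a (one α) = a := by
  rw [otimes, one, neg_neg, MV.add_zero, neg_neg]

theorem isCounit_imp {a b : α} (hab : ¬le a b) (hba : ¬le b a) : IsCounit (imp b a) :=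
  ⟨⟨le_one _, hba⟩, imp a b, ⟨le_one _, hab⟩, sup_imp_imp b a⟩

theorem subset_gen (S : Set α) : S ⊆ gen S :=
  fun _ hx => Set.mem_sInter.mpr fun _ hF => hF.2 hx

theorem gen_subset {S F : Set α} (hF : IsImpFilter F) (hS : S ⊆ F) : gen S ⊆ F :=
  Set.sInter_subset_of_mem ⟨hF, hS⟩

theorem IsImpFilter.mem_of_imp_mem {F : Set α} (hF : IsImpFilter F) {a b : α}
    (ha : a ∈ F) (hab : imp a b ∈ F) : b ∈ F :=
  hF.2.1 _ (hF.2.2.2 a ha _ hab) b (otimes_imp_le a b)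

structure IsMVHom (f : α → β) : Prop where
  map_add : ∀ x y : α, f (x + y) = f x + f y
  map_neg : ∀ x : α, f (-x) = -f x
  map_zero : f 0 = 0

def shell (f : α → β) : Set α := {x | f x = one β}

namespace IsMVHom

variable {f : α → β}

theorem map_one (hf : IsMVHom f) : f (one α) = one β := by
  rw [one, hf.map_neg, hf.map_zero, one]

theorem map_imp (hf : IsMVHom f) (a b : α) : f (imp a b) = imp (f a) (f b) := by
  rw [imp, hf.map_add, hf.map_neg, imp]

theorem map_otimes (hf : IsMVHom f) (a b : α) : f (otimes a b) = otimes (f a) (f b) := by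
  simp only [otimes, hf.map_add, hf.map_neg]

theorem map_inf (hf : IsMVHom f) (a b : α) : f (inf a b) = inf (f a) (f b) := by
  simp only [inf, sup, imp, hf.map_add, hf.map_neg]

theorem isImpFilter_shell (hf : IsMVHom f) : IsImpFilter (shell f) := by
  refine ⟨hf.map_one, fun a ha b hab => ?_, fun a ha b hb => ?_, fun a ha b hb => ?_⟩
  · have h := congrArg f hab
    rwa [hf.map_imp, hf.map_one, ha, one_imp] at h
  · show f (inf a b) = one β
    rw [hf.map_inf, ha, hb, inf_self]
  · show f (otimes a b) = one β
    rw [hf.map_otimes, ha, hb, otimes_one]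

end IsMVHom

end MV

open MV

/-- Universal property: if an MV-morphism `f` has shell inside `P`
and takes `P` over all counits of the codomain, then `ℓ(P) ⊆ sh(f)`. -/
theorem locFilter_subset_shell {α β : Type*} [MV α] [MV β] (f : α → β)
    (hadd : ∀ x y : α, f (x + y) = f x + f y)
    (hneg : ∀ x : α, f (-x) = -f x) (hzero : f 0 = 0)
    (P : Set α) (hP : IsPrime P)
    (hsh : {x : α | f x = one β} ⊆ P)
    (hN : conrad β ⊆ {y : β | ∃ p ∈ P, le (f p) y}) :
    locFilter P ⊆ {x : α | f x = one β} := by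
  have hf : IsMVHom f := ⟨hadd, hneg, hzero⟩
  refine gen_subset hf.isImpFilter_shell ?_
  rintro _ ⟨x, hxP, p, hpP, rfl⟩
  show f (imp x p) = one β
  by_contra hxp
  have hpx : f (imp p x) ≠ one β := fun h => hxP (hP.1.mem_of_imp_mem hpP (hsh h))
  rw [hf.map_imp] at hxp hpx
  obtain ⟨q, hqP, hq⟩ := hN (subset_gen _ (isCounit_imp hxp hpx))
  have hqpx : imp q (imp p x) ∈ P :=
    hsh (show f _ = one β by rwa [hf.map_imp, hf.map_imp])
  exact hxP (hP.1.mem_of_imp_mem hpP (hP.1.mem_of_imp_mem hqP hqpx))
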